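/- arXiv:2406.06936 — 3 statements merged into one kernel-verified Lean document; each statement's English description precedes it below -/
import Mathlib

section
/- Let v₁, …, v_k ∈ S^{n-1} ⊆ ℝ^n be linearly independent unit vectors with k ≥ 2, and let C = cone(v₁, …, v_k) be the simplicial cone they generate. Let H ⊆ ℝ^n be a linear hyperplane containing v₂, …, v_k, and let h = d(v₁, H) > 0 be the Euclidean distance from v₁ to H. Let X be a random point distributed uniformly on C ∩ B^n (with respect to the k-dimensional Hausdorff measure restricted to C ∩ B^n, normalized to a probability measure), where B^n is the closed unit ball. Then for every ε > 0, P(d(X, H) ≤ ε) ≤ ((1+ε)^k − 1)/h. -/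
/-!
On the cone the distance to `H` is linear: `∑ λᵢ vᵢ` lies at distance `λ₁ h` from `H`.
The homothety with centre `v₁` and ratio `r ∈ (0, 1)` maps the convex set `S = C ∩ Bⁿ`,
which contains `v₁`, into itself and onto points at distance at least `(1 - r) h` from `H`.
When `(1 - r) h > ε` its image is disjoint from the event `{d(X, H) ≤ ε}` and has measure
`rᵏ μ(S)`, so the event has probability at most `1 - rᵏ ≤ k (1 - r)`. The strict Bernoulli
inequality `k ε < (1 + ε)ᵏ - 1` (here `k ≥ 2` is needed) leaves room to take `1 - r`
slightly above `ε / h`.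
-/

open MeasureTheory

noncomputable section

/-- The simplicial cone generated by the vectors `v 0, …, v (k-1)`. -/
def simplicialCone {n k : ℕ} (v : Fin k → EuclideanSpace ℝ (Fin n)) :
    Set (EuclideanSpace ℝ (Fin n)) :=
  {x | ∃ lam : Fin k → ℝ, (∀ i, 0 ≤ lam i) ∧ x = ∑ i, lam i • v i}

/-- The uniform probability measure on a set `s`, with respect to the
`d`-dimensional Hausdorff measure. -/
def uniformOn {n : ℕ} (d : ℝ) (s : Set (EuclideanSpace ℝ (Fin n))) :
    Measure (EuclideanSpace ℝ (Fin n)) :=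
  ((μH[d] : Measure (EuclideanSpace ℝ (Fin n))) s)⁻¹ •
    (μH[d] : Measure (EuclideanSpace ℝ (Fin n))).restrict s

open Metric Set
open scoped ENNReal

lemma Submodule.infDist_smul_add_of_mem {E : Type*} [SeminormedAddCommGroup E]
    [NormedSpace ℝ E] (H : Submodule ℝ E) (u : E) {y : E} (hy : y ∈ H) (a : ℝ) :
    infDist (a • u + y) H = |a| * infDist u H := by
  have hnorm (x : E) : infDist x H = ‖Submodule.Quotient.mk (p := H) x‖ :=
    (QuotientAddGroup.norm_mk (S := H.toAddSubgroup) x).symm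
  rw [hnorm, hnorm, Submodule.Quotient.mk_add, (Submodule.Quotient.mk_eq_zero H).2 hy, add_zero,
    Submodule.Quotient.mk_smul, norm_smul, Real.norm_eq_abs]

lemma ENNReal.div_le_one_sub_of_add_mul_le {a c m : ℝ≥0∞} (h : a + c * m ≤ m) :
    a / m ≤ 1 - c := by
  rcases eq_or_ne m ⊤ with rfl | hm
  · simp
  refine ENNReal.div_le_of_le_mul ?_
  rw [ENNReal.sub_mul fun _ _ ↦ hm, one_mul]
  exact ENNReal.le_sub_of_add_le_right (ne_top_of_le_ne_top hm (le_add_self.trans h)) h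

lemma exists_one_sub_pow_le_of_lt {k : ℕ} (hk : 2 ≤ k) {ε h : ℝ} (hε : 0 < ε) (hεh : ε < h) :
    ∃ r : ℝ, 0 < r ∧ ε < (1 - r) * h ∧ 1 - r ^ k ≤ ((1 + ε) ^ k - 1) / h := by
  have hh : 0 < h := hε.trans hεh
  have hbernoulli : k * (ε / h) < ((1 + ε) ^ k - 1) / h := by
    have := one_add_mul_self_lt_rpow_one_add (by linarith : (-1 : ℝ) ≤ ε) hε.ne'
      (by exact_mod_cast hk : (1 : ℝ) < k)
    rw [Real.rpow_natCast] at this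
    rw [← mul_div_assoc, div_lt_div_iff_of_pos_right hh]
    linarith
  have hk₀ : (0 : ℝ) < k := by positivity
  obtain ⟨t, hεt, ht⟩ := exists_between <|
    lt_min ((div_lt_one hh).2 hεh) ((lt_div_iff₀' hk₀).2 hbernoulli)
  obtain ⟨ht₁, hkt⟩ := lt_min_iff.1 ht
  rw [lt_div_iff₀' hk₀] at hkt
  refine ⟨1 - t, by linarith, by rwa [sub_sub_cancel, ← div_lt_iff₀ hh], ?_⟩
  have := one_add_mul_le_pow (by linarith : (-2 : ℝ) ≤ -t) k
  rw [mul_neg, ← sub_eq_add_neg, ← sub_eq_add_neg] at this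
  linarith

section Cone

variable {n k : ℕ} {v : Fin k → EuclideanSpace ℝ (Fin n)}
  {H : Submodule ℝ (EuclideanSpace ℝ (Fin n))} {i₀ : Fin k} {x : EuclideanSpace ℝ (Fin n)}

lemma mem_simplicialCone_self (i : Fin k) : v i ∈ simplicialCone v :=
  ⟨Pi.single i 1, fun j ↦ by by_cases hj : j = i <;> simp [hj],
    by simp [Pi.single_apply]⟩

lemma convex_simplicialCone : Convex ℝ (simplicialCone v) := by
  rintro _ ⟨l, hl, rfl⟩ _ ⟨m, hm, rfl⟩ a b ha hb -
  refine ⟨a • l + b • m, fun i ↦ ?_, ?_⟩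
  · simp only [Pi.add_apply, Pi.smul_apply, smul_eq_mul]
    exact add_nonneg (mul_nonneg ha (hl i)) (mul_nonneg hb (hm i))
  · simp only [Pi.add_apply, Pi.smul_apply, smul_eq_mul, add_smul, mul_smul,
      Finset.sum_add_distrib, Finset.smul_sum]

lemma exists_smul_add_mem_of_mem_simplicialCone (hvH : ∀ i, i ≠ i₀ → v i ∈ H)
    (hx : x ∈ simplicialCone v) : ∃ a : ℝ, 0 ≤ a ∧ ∃ y ∈ H, x = a • v i₀ + y := by
  classical
  obtain ⟨l, hl, rfl⟩ := hx
  refine ⟨l i₀, hl i₀, ∑ i ∈ {i₀}ᶜ, l i • v i, ?_, Fintype.sum_eq_add_sum_compl i₀ _⟩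
  exact H.sum_mem fun i hi ↦ H.smul_mem _ (hvH i (by simpa using hi))

lemma homothety_mapsTo_simplicialCone_inter_closedBall (hunit : ‖v i₀‖ = 1) {r : ℝ}
    (hr₀ : 0 ≤ r) (hr₁ : r ≤ 1) :
    MapsTo (AffineMap.homothety (v i₀) r) (simplicialCone v ∩ closedBall 0 1)
      (simplicialCone v ∩ closedBall 0 1) := fun x hx ↦ by
  rw [AffineMap.homothety_eq_lineMap]
  exact (convex_simplicialCone.inter (convex_closedBall 0 1)).lineMap_mem
    ⟨mem_simplicialCone_self i₀, by simp [hunit]⟩ hx ⟨hr₀, hr₁⟩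

lemma le_infDist_homothety (hvH : ∀ i, i ≠ i₀ → v i ∈ H) {r : ℝ} (hr : 0 ≤ r)
    (hx : x ∈ simplicialCone v) :
    (1 - r) * infDist (v i₀) H ≤ infDist (AffineMap.homothety (v i₀) r x) H := by
  obtain ⟨a, ha, y, hy, rfl⟩ := exists_smul_add_mem_of_mem_simplicialCone hvH hx
  have hxr : AffineMap.homothety (v i₀) r (a • v i₀ + y) =
      (1 - r + r * a) • v i₀ + r • y := by
    rw [AffineMap.homothety_apply, vsub_eq_sub, vadd_eq_add]
    module
  rw [hxr, H.infDist_smul_add_of_mem _ (H.smul_mem r hy)]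
  have hcoeff : 1 - r ≤ |1 - r + r * a| := le_abs.2 (.inl (by nlinarith))
  exact mul_le_mul_of_nonneg_right hcoeff infDist_nonneg

end Cone

section Uniform

variable {n : ℕ} {d : ℝ} {s D : Set (EuclideanSpace ℝ (Fin n))}

lemma uniformOn_apply (hD : MeasurableSet D) : uniformOn d s D = μH[d] (D ∩ s) / μH[d] s := by
  rw [uniformOn, Measure.smul_apply, Measure.restrict_apply hD, smul_eq_mul, div_eq_mul_inv,
    mul_comm]

lemma uniformOn_le_one (hD : MeasurableSet D) : uniformOn d s D ≤ 1 := by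
  rw [uniformOn_apply hD]
  exact ENNReal.div_le_of_le_mul ((one_mul (μH[d] s)).symm ▸ measure_mono inter_subset_right)

lemma uniformOn_le_one_sub_of_homothety_image_subset (hd : 0 ≤ d) (hD : MeasurableSet D)
    (c : EuclideanSpace ℝ (Fin n)) {r : ℝ} (hr : 0 < r)
    (hsub : AffineMap.homothety c r '' s ⊆ s \ D) :
    uniformOn d s D ≤ 1 - ENNReal.ofReal (r ^ d) := by
  have himage : μH[d] (AffineMap.homothety c r '' s) = ENNReal.ofReal (r ^ d) * μH[d] s := by
    rw [hausdorffMeasure_homothety_image hd c hr.ne', ENNReal.smul_def, smul_eq_mul,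
      ← ENNReal.ofReal_coe_nnreal, NNReal.coe_rpow, coe_nnnorm, Real.norm_of_nonneg hr.le]
  rw [uniformOn_apply hD]
  refine ENNReal.div_le_one_sub_of_add_mul_le ?_
  calc μH[d] (D ∩ s) + ENNReal.ofReal (r ^ d) * μH[d] s
      ≤ μH[d] (s ∩ D) + μH[d] (s \ D) := by
        rw [inter_comm, ← himage]; gcongr
    _ = μH[d] s := measure_inter_add_sdiff s hD

end Uniform

/-- let `C = cone(v₁,…,v_k)` (`k ≥ 2`, the `vᵢ` linearly independent
unit vectors), let `H` be a linear hyperplane containing `v₂,…,v_k` with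
`h = d(v₁,H) > 0`, and let `X` be uniform on `C ∩ Bⁿ` for the normalized
`k`-dimensional Hausdorff measure.  Then for all `ε > 0`,
`P(d(X,H) ≤ ε) ≤ ((1+ε)^k − 1)/h`. -/
theorem statement13 (n k : ℕ) (hk : 2 ≤ k)
    (v : Fin k → EuclideanSpace ℝ (Fin n))
    (hunit : ∀ i, ‖v i‖ = 1)
    (H : Submodule ℝ (EuclideanSpace ℝ (Fin n)))
    (hvH : ∀ i : Fin k, i ≠ ⟨0, by omega⟩ → v i ∈ H)
    (h : ℝ)
    (hdef : h = Metric.infDist (v ⟨0, by omega⟩) (H : Set (EuclideanSpace ℝ (Fin n))))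
    (hpos : 0 < h)
    (ε : ℝ) (hε : 0 < ε) :
    uniformOn (k : ℝ)
        (simplicialCone v ∩ Metric.closedBall (0 : EuclideanSpace ℝ (Fin n)) 1)
        {x | Metric.infDist x (H : Set (EuclideanSpace ℝ (Fin n))) ≤ ε} ≤
      ENNReal.ofReal (((1 + ε) ^ k - 1) / h) := by
  have hD : MeasurableSet {x | infDist x (H : Set (EuclideanSpace ℝ (Fin n))) ≤ ε} :=
    measurableSet_le (continuous_infDist_pt _).measurable measurable_const
  rcases le_or_gt h ε with hhε | hεh
  · refine (uniformOn_le_one hD).trans (ENNReal.one_le_ofReal.2 ?_)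
    rw [le_div_iff₀ hpos]
    linarith [le_self_pow₀ (by linarith : (1 : ℝ) ≤ 1 + ε) (by omega : k ≠ 0)]
  obtain ⟨r, hr₀, hεr, hrB⟩ := exists_one_sub_pow_le_of_lt hk hε hεh
  have hr₁ : r ≤ 1 := by nlinarith
  have hsub : MapsTo (AffineMap.homothety (v ⟨0, by omega⟩) r)
      (simplicialCone v ∩ closedBall 0 1)
      ((simplicialCone v ∩ closedBall 0 1) \ {x | infDist x (H : Set _) ≤ ε}) := fun x hx ↦
    ⟨homothety_mapsTo_simplicialCone_inter_closedBall (hunit _) hr₀.le hr₁ hx,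
      (hεr.trans_le (hdef ▸ le_infDist_homothety hvH hr₀.le hx.1)).not_ge⟩
  calc _ ≤ 1 - ENNReal.ofReal (r ^ (k : ℝ)) :=
        uniformOn_le_one_sub_of_homothety_image_subset k.cast_nonneg hD _ hr₀
          hsub.image_subset
    _ ≤ _ := by
        rw [← ENNReal.ofReal_one, ← ENNReal.ofReal_sub _ (by positivity), Real.rpow_natCast]
        exact ENNReal.ofReal_le_ofReal hrB
end
end

section
/- There is a universal constant c > 0 with the following property: for every n ≥ 1, every N ≥ 1, and all unit vectors g₁, …, g_N ∈ ℝ^n, the zonotope Z = {Σᵢ tᵢ·gᵢ : tᵢ ∈ [0,1]} satisfies gdiam(Z) ≥ c·N/√n. Moreover, for each n and N ≥ n there exist unit vectors g₁, …, g_N ∈ ℝ^n whose zonotope Z satisfies gdiam(Z) ≤ C·N/√n for a universal constant C; hence the minimal geometric diameter of a zonotope with N unit-length generators in ℝ^n is Θ(N/√n). -/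
noncomputable section

/-- The zonotope with generators `g 0, …, g (N-1)`: the Minkowski sum of the
segments `[0, g i]`. -/
def zonotope {n N : ℕ} (g : Fin N → EuclideanSpace ℝ (Fin n)) :
    Set (EuclideanSpace ℝ (Fin n)) :=
  (fun t : Fin N → ℝ => ∑ i, t i • g i) '' {t | ∀ i, t i ∈ Set.Icc (0 : ℝ) 1}

/-!
For every direction `w`, choosing `tᵢ ∈ {0, 1}` according to the sign of `⟪gᵢ, w⟫` gives two
points of `Z` whose difference has inner product `∑ᵢ |⟪gᵢ, w⟫|` with `w`, so
`∑ᵢ |⟪gᵢ, w⟫| ≤ diam Z · ‖w‖`. Averaged over the `2ⁿ` sign vectors `w ∈ {±1}ⁿ` (all of norm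
`√n`), each unit `gᵢ` contributes at least `5/9` by Khintchine's inequality, which follows from
the pointwise bound `x² - 4x⁴/27 ≤ |x|` and the moments `E S² = 1`, `E S⁴ ≤ 3` of a Rademacher
sum; hence some `w` gives `diam Z ≥ 5N / (9√n)`.

Conversely, for `gᵢ = e_(i mod n)` the zonotope is a box whose sides have length at most
`⌊N/n⌋ + 1 ≤ 2N/n`, so its diameter is at most `√n · 2N/n = 2N/√n`.
-/

open Finset RealInnerProductSpace

section Width

variable {n N : ℕ}

lemma isCompact_zonotope (g : Fin N → EuclideanSpace ℝ (Fin n)) : IsCompact (zonotope g) := by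
  have hcube :
      {t : Fin N → ℝ | ∀ i, t i ∈ Set.Icc (0 : ℝ) 1} = Set.univ.pi fun _ => Set.Icc 0 1 :=
    Set.ext fun _ => Set.mem_univ_pi.symm
  rw [zonotope, hcube]
  exact (isCompact_univ_pi fun _ => isCompact_Icc).image (by fun_prop)

lemma sum_abs_inner_le_diam_zonotope_mul_norm (g : Fin N → EuclideanSpace ℝ (Fin n))
    (w : EuclideanSpace ℝ (Fin n)) :
    ∑ i, |⟪g i, w⟫| ≤ Metric.diam (zonotope g) * ‖w‖ := by
  set t : Fin N → ℝ := fun i => if 0 ≤ ⟪g i, w⟫ then 1 else 0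
  have ht : ∀ i, t i ∈ Set.Icc (0 : ℝ) 1 := fun i => by
    by_cases h : 0 ≤ ⟪g i, w⟫ <;> simp [t, h]
  have hx : ∑ i, t i • g i ∈ zonotope g := ⟨t, ht, rfl⟩
  have hy : ∑ i, (1 - t i) • g i ∈ zonotope g :=
    ⟨fun i => 1 - t i, fun i => ⟨by linarith [(ht i).2], by linarith [(ht i).1]⟩, rfl⟩
  have hinner : ⟪∑ i, t i • g i - ∑ i, (1 - t i) • g i, w⟫ = ∑ i, |⟪g i, w⟫| := by
    simp only [inner_sub_left, sum_inner, real_inner_smul_left, ← Finset.sum_sub_distrib]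
    refine Finset.sum_congr rfl fun i _ => ?_
    by_cases h : 0 ≤ ⟪g i, w⟫
    · simp [t, h, abs_of_nonneg h]
    · simp [t, h, abs_of_neg (not_le.mp h)]
  calc ∑ i, |⟪g i, w⟫| = ⟪∑ i, t i • g i - ∑ i, (1 - t i) • g i, w⟫ := hinner.symm
    _ ≤ ‖∑ i, t i • g i - ∑ i, (1 - t i) • g i‖ * ‖w‖ := real_inner_le_norm _ _
    _ ≤ Metric.diam (zonotope g) * ‖w‖ := by
      gcongr
      rw [← dist_eq_norm]
      exact Metric.dist_le_diam_of_mem (isCompact_zonotope g).isBounded hx hy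

end Width

section Khintchine

variable {n : ℕ}

def boolSign (b : Bool) : ℝ := if b then 1 else -1

def signedSum (s : Fin n → Bool) (a : Fin n → ℝ) : ℝ := ∑ j, boolSign (s j) * a j

lemma signedSum_cons (b : Bool) (s : Fin n → Bool) (a : Fin (n + 1) → ℝ) :
    signedSum (Fin.cons b s) a = boolSign b * a 0 + signedSum s (Fin.tail a) := by
  simp [signedSum, Fin.sum_univ_succ, Fin.tail]

lemma sum_signs_succ {M : Type*} [AddCommMonoid M] (F : (Fin (n + 1) → Bool) → M) :
    ∑ s, F s = ∑ s : Fin n → Bool, (F (Fin.cons true s) + F (Fin.cons false s)) := by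
  rw [← (Fin.consEquiv fun _ => Bool).sum_comp, Fintype.sum_prod_type, Fintype.sum_bool,
    ← Finset.sum_add_distrib]
  rfl

lemma sum_sq_eq_sq_add_sum_tail (a : Fin (n + 1) → ℝ) :
    ∑ j, a j ^ 2 = a 0 ^ 2 + ∑ j, Fin.tail a j ^ 2 :=
  Fin.sum_univ_succ _

lemma sum_signedSum_sq (a : Fin n → ℝ) :
    ∑ s, signedSum s a ^ 2 = 2 ^ n * ∑ j, a j ^ 2 := by
  induction n with
  | zero => simp [signedSum]
  | succ n ih =>
    simp only [sum_signs_succ, signedSum_cons, boolSign]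
    have hpair : ∀ S : ℝ, (1 * a 0 + S) ^ 2 + (-1 * a 0 + S) ^ 2 = 2 * a 0 ^ 2 + 2 * S ^ 2 :=
      fun S => by ring
    simp only [if_true, Bool.false_eq_true, if_false, hpair, Finset.sum_add_distrib,
      ← Finset.mul_sum, ih, Finset.sum_const, Finset.card_univ, Fintype.card_fun,
      Fintype.card_bool, Fintype.card_fin, nsmul_eq_mul, sum_sq_eq_sq_add_sum_tail a]
    push_cast
    ring

lemma sum_signedSum_pow_four_le (a : Fin n → ℝ) :
    ∑ s, signedSum s a ^ 4 ≤ 3 * 2 ^ n * (∑ j, a j ^ 2) ^ 2 := by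
  induction n with
  | zero => simp [signedSum]
  | succ n ih =>
    simp only [sum_signs_succ, signedSum_cons, boolSign]
    have hpair : ∀ S : ℝ, (1 * a 0 + S) ^ 4 + (-1 * a 0 + S) ^ 4
        = 2 * a 0 ^ 4 + 12 * a 0 ^ 2 * S ^ 2 + 2 * S ^ 4 :=
      fun S => by ring
    simp only [if_true, Bool.false_eq_true, if_false, hpair, Finset.sum_add_distrib,
      ← Finset.mul_sum, sum_signedSum_sq, Finset.sum_const, Finset.card_univ, Fintype.card_fun,
      Fintype.card_bool, Fintype.card_fin, nsmul_eq_mul, sum_sq_eq_sq_add_sum_tail a]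
    push_cast
    rw [pow_succ (2 : ℝ) n]
    nlinarith [ih (Fin.tail a),
      mul_nonneg (pow_nonneg zero_le_two n) (pow_nonneg (sq_nonneg (a 0)) 2)]

lemma sq_sub_pow_four_le_abs (x : ℝ) : x ^ 2 - 4 / 27 * x ^ 4 ≤ |x| := by
  -- `|x| - x² + 4x⁴/27 = (4/27) |x| (|x| - 3/2)² (|x| + 3)`
  have h := mul_nonneg (mul_nonneg (abs_nonneg x) (sq_nonneg (|x| - 3 / 2)))
    (add_nonneg (abs_nonneg x) zero_le_three)
  rw [show x ^ 4 = (x ^ 2) ^ 2 by ring, ← sq_abs x]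
  nlinarith [h]

lemma le_sum_abs_signedSum (a : Fin n → ℝ) (ha : ∑ j, a j ^ 2 = 1) :
    5 / 9 * 2 ^ n ≤ ∑ s, |signedSum s a| := by
  have h2 := sum_signedSum_sq a
  have h4 := sum_signedSum_pow_four_le a
  rw [ha] at h2 h4
  calc 5 / 9 * 2 ^ n ≤ ∑ s, signedSum s a ^ 2 - 4 / 27 * ∑ s, signedSum s a ^ 4 := by
        linarith
    _ = ∑ s, (signedSum s a ^ 2 - 4 / 27 * signedSum s a ^ 4) := by
        rw [Finset.mul_sum, Finset.sum_sub_distrib]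
    _ ≤ ∑ s, |signedSum s a| := Finset.sum_le_sum fun s _ => sq_sub_pow_four_le_abs _

end Khintchine

section LowerBound

variable {n N : ℕ}

def signVector (s : Fin n → Bool) : EuclideanSpace ℝ (Fin n) :=
  WithLp.toLp 2 fun j => boolSign (s j)

lemma norm_signVector (s : Fin n → Bool) : ‖signVector s‖ = √n := by
  have hcoord : ∀ j, signVector s j ^ 2 = 1 := fun j => by
    cases s j <;> simp [signVector, boolSign]
  rw [← Real.sqrt_sq (norm_nonneg _), EuclideanSpace.real_norm_sq_eq]
  simp [hcoord]

lemma inner_signVector (v : EuclideanSpace ℝ (Fin n)) (s : Fin n → Bool) :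
    ⟪v, signVector s⟫ = signedSum s v := by
  simp [PiLp.inner_apply, signedSum, signVector]

lemma exists_sign_le_sum_abs_inner (g : Fin N → EuclideanSpace ℝ (Fin n))
    (hg : ∀ i, ‖g i‖ = 1) : ∃ s, 5 / 9 * N ≤ ∑ i, |⟪g i, signVector s⟫| := by
  have hunit : ∀ i, ∑ j, g i j ^ 2 = 1 := fun i => by
    rw [← EuclideanSpace.real_norm_sq_eq, hg i, one_pow]
  have havg :
      ∑ _s : Fin n → Bool, 5 / 9 * (N : ℝ) ≤ ∑ s, ∑ i, |⟪g i, signVector s⟫| := by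
    simp only [inner_signVector]
    rw [Finset.sum_comm]
    calc ∑ _s : Fin n → Bool, 5 / 9 * (N : ℝ) = ∑ _i : Fin N, 5 / 9 * 2 ^ n := by
          simp only [Finset.sum_const, Finset.card_univ, Fintype.card_fun, Fintype.card_bool,
            Fintype.card_fin, nsmul_eq_mul]
          push_cast
          ring
      _ ≤ ∑ i, ∑ s, |signedSum s (g i)| :=
          Finset.sum_le_sum fun i _ => le_sum_abs_signedSum _ (hunit i)
  obtain ⟨s, -, hs⟩ := Finset.exists_le_of_sum_le Finset.univ_nonempty havg
  exact ⟨s, hs⟩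

theorem le_diam_zonotope_mul_sqrt (g : Fin N → EuclideanSpace ℝ (Fin n))
    (hg : ∀ i, ‖g i‖ = 1) :
    5 / 9 * N ≤ Metric.diam (zonotope g) * √n := by
  obtain ⟨s, hs⟩ := exists_sign_le_sum_abs_inner g hg
  calc 5 / 9 * (N : ℝ) ≤ ∑ i, |⟪g i, signVector s⟫| := hs
    _ ≤ Metric.diam (zonotope g) * ‖signVector s‖ :=
        sum_abs_inner_le_diam_zonotope_mul_norm g _
    _ = Metric.diam (zonotope g) * √n := by rw [norm_signVector]

end LowerBound

section UpperBound

lemma norm_le_sqrt_card_mul_of_abs_le {ι : Type*} [Fintype ι] (v : EuclideanSpace ℝ ι)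
    {r : ℝ} (hr : 0 ≤ r) (h : ∀ k, |v k| ≤ r) : ‖v‖ ≤ √(Fintype.card ι) * r := by
  rw [← Real.sqrt_sq (norm_nonneg _), EuclideanSpace.real_norm_sq_eq]
  calc √(∑ k, v k ^ 2) ≤ √(∑ _k : ι, r ^ 2) :=
        Real.sqrt_le_sqrt <| Finset.sum_le_sum fun k _ =>
          sq_le_sq' (abs_le.mp (h k)).1 (abs_le.mp (h k)).2
    _ = √(Fintype.card ι) * r := by
        rw [Finset.sum_const, Finset.card_univ, nsmul_eq_mul, Real.sqrt_mul (Nat.cast_nonneg _),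
          Real.sqrt_sq hr]

variable {n N : ℕ}

lemma apply_mem_Icc_of_mem_zonotope_single (σ : Fin N → Fin n) {x : EuclideanSpace ℝ (Fin n)}
    (hx : x ∈ zonotope fun i => EuclideanSpace.single (σ i) (1 : ℝ)) (k : Fin n) :
    x k ∈ Set.Icc 0 (#{i | σ i = k} : ℝ) := by
  obtain ⟨t, ht, rfl⟩ := hx
  have hcoord :
      (∑ i, t i • EuclideanSpace.single (σ i) (1 : ℝ)) k = ∑ i with σ i = k, t i := by
    simp [Finset.sum_filter, Pi.single_apply, eq_comm]
  rw [hcoord]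
  refine ⟨Finset.sum_nonneg fun i _ => (ht i).1, ?_⟩
  simpa using Finset.sum_le_sum fun i (_ : i ∈ ({i | σ i = k} : Finset (Fin N))) => (ht i).2

lemma diam_zonotope_single_le (σ : Fin N → Fin n) {m : ℕ}
    (hσ : ∀ k, #{i | σ i = k} ≤ m) :
    Metric.diam (zonotope fun i => EuclideanSpace.single (σ i) (1 : ℝ)) ≤ √n * m := by
  refine Metric.diam_le_of_forall_dist_le (by positivity) fun x hx y hy => ?_
  rw [dist_eq_norm]
  refine (norm_le_sqrt_card_mul_of_abs_le _ (Nat.cast_nonneg m) fun k => ?_).trans_eq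
    (by rw [Fintype.card_fin])
  have hxk := apply_mem_Icc_of_mem_zonotope_single σ hx k
  have hyk := apply_mem_Icc_of_mem_zonotope_single σ hy k
  have hk : (#{i | σ i = k} : ℝ) ≤ m := by exact_mod_cast hσ k
  rw [PiLp.sub_apply, abs_sub_le_iff]
  constructor <;> linarith [hxk.1, hxk.2, hyk.1, hyk.2]

lemma card_filter_modEq_le (N n k : ℕ) (hn : 0 < n) :
    #{i : Fin N | (i : ℕ) ≡ k [MOD n]} ≤ N / n + 1 := by
  calc #{i : Fin N | (i : ℕ) ≡ k [MOD n]} ≤ #{x ∈ range N | x ≡ k [MOD n]} :=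
        Finset.card_le_card_of_injOn Fin.val (fun i hi => by simp_all) Fin.val_injective.injOn
    _ = N / n + if k % n < N % n then 1 else 0 := by
        rw [← Nat.count_eq_card_filter_range, Nat.count_modEq_card _ hn]
    _ ≤ N / n + 1 := by split_ifs <;> omega

theorem exists_unit_diam_zonotope_le (hn : 0 < n) (hnN : n ≤ N) :
    ∃ g : Fin N → EuclideanSpace ℝ (Fin n), (∀ i, ‖g i‖ = 1) ∧
      Metric.diam (zonotope g) ≤ 2 * N / √n := by
  set σ : Fin N → Fin n := fun i => ⟨i % n, Nat.mod_lt _ hn⟩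
  have hfibre : ∀ k, #{i | σ i = k} ≤ N / n + 1 := fun k => by
    convert card_filter_modEq_le N n k hn using 3 with i
    simp [σ, Fin.ext_iff, Nat.ModEq, Nat.mod_eq_of_lt k.isLt]
  refine ⟨fun i => EuclideanSpace.single (σ i) 1, fun i => by simp, ?_⟩
  have hnR : (0 : ℝ) < n := by exact_mod_cast hn
  have hm : ((N / n + 1 : ℕ) : ℝ) ≤ 2 * N / n := by
    have hdiv : ((N / n : ℕ) : ℝ) ≤ N / n := Nat.cast_div_le
    have hone : (1 : ℝ) ≤ N / n := (one_le_div hnR).mpr (by exact_mod_cast hnN)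
    push_cast
    rw [mul_div_assoc]
    linarith
  calc Metric.diam (zonotope fun i => EuclideanSpace.single (σ i) (1 : ℝ))
      ≤ √n * ((N / n + 1 : ℕ) : ℝ) := diam_zonotope_single_le σ hfibre
    _ ≤ √n * (2 * N / n) := by gcongr
    _ = 2 * N / √n := by
        have : 0 < √(n : ℝ) := Real.sqrt_pos.mpr hnR
        field_simp
        rw [Real.sq_sqrt hnR.le, mul_comm]

end UpperBound

/-- there is a universal constant `c > 0` such that every zonotope in
`ℝ^n` with `N ≥ 1` unit generators has geometric diameter at least `c·N/√n`;
moreover there is a universal constant `C > 0` such that for every `n` and `N ≥ n`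
some zonotope with `N` unit generators has geometric diameter at most `C·N/√n`.
Hence the minimal geometric diameter of a zonotope with `N` unit generators in
`ℝ^n` is `Θ(N/√n)`. -/
theorem statement17 :
    ∃ c C : ℝ, 0 < c ∧ 0 < C ∧
      (∀ (n N : ℕ), 1 ≤ n → 1 ≤ N →
        ∀ g : Fin N → EuclideanSpace ℝ (Fin n), (∀ i, ‖g i‖ = 1) →
          c * N / Real.sqrt n ≤ Metric.diam (zonotope g)) ∧
      (∀ (n N : ℕ), 1 ≤ n → n ≤ N →
        ∃ g : Fin N → EuclideanSpace ℝ (Fin n), (∀ i, ‖g i‖ = 1) ∧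
          Metric.diam (zonotope g) ≤ C * N / Real.sqrt n) := by
  refine ⟨5 / 9, 2, by norm_num, by norm_num, ?_, ?_⟩
  · intro n N hn _ g hg
    rw [div_le_iff₀ (Real.sqrt_pos.mpr (by exact_mod_cast hn))]
    exact le_diam_zonotope_mul_sqrt g hg
  · intro n N hn hnN
    exact exists_unit_diam_zonotope_le hn hnN
end
end

section
/- Let n ≥ 2 and 1 ≤ k ≤ n−1. In ℝ^n, let u = Σ_{i=1}^{k} eᵢ − (k/n)·Σ_{i=1}^{n} eᵢ and w = e_{k+1} − e_k, where eᵢ are the standard basis vectors. Then ‖u‖₂ = √(k(n−k)/n), |⟨w, u⟩| = 1, and consequently |⟨w, u⟩| / (‖w‖₂·‖u‖₂) = √(n/(2k(n−k))). In particular, the minimum of this quantity over k ∈ {1, …, n−1} is Θ(1/√n): there are universal constants c, C > 0 with c/√n ≤ min_k √(n/(2k(n−k))) ≤ C/√n. -/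
/-!
The vector `w` is a difference of two distinct standard basis vectors, which are orthonormal, so
`‖w‖ = √2`, and `⟪w, u⟫` is the difference `(-k/n) - (1 - k/n) = -1` of the two coordinates of `u` on
either side of its jump. The vector `u` takes the value `1 - k/n` on `k` coordinates and `-k/n` on the
other `n - k`, so `‖u‖² = k(n-k)/n`. For the minimum over `k`, AM-GM gives `2k(n-k) ≤ n²/2`, hence
every value is at least `√(2/n)`, while `k = ⌊n/2⌋` makes `2k(n-k) ≥ n²/4`, so the value there is at
most `2/√n`.
-/

open scoped RealInnerProductSpace

theorem Orthonormal.norm_sub_of_ne {ι F : Type*} [SeminormedAddCommGroup F] [InnerProductSpace ℝ F]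
    {v : ι → F} (hv : Orthonormal ℝ v) {i j : ι} (hij : i ≠ j) : ‖v i - v j‖ = √2 := by
  rw [norm_sub_eq_sqrt_iff_real_inner_eq_zero.2 (hv.inner_eq_zero hij), hv.norm_eq_one,
    hv.norm_eq_one]
  norm_num

theorem sum_indicator_sub_mean_sq {n k : ℕ} (hk : k ≤ n) :
    ∑ i : Fin n, ((if (i : ℕ) < k then (1 : ℝ) else 0) - k / n) ^ 2 = k * (n - k) / n := by
  obtain rfl | hn := n.eq_zero_or_pos
  · simp
  have hsq (i : Fin n) : ((if (i : ℕ) < k then (1 : ℝ) else 0) - k / n) ^ 2 =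
      (if (i : ℕ) < k then (1 : ℝ) else 0) * (1 - 2 * (k / n)) + (k / n) ^ 2 := by
    split_ifs <;> ring
  have hcount : ∑ i : Fin n, (if (i : ℕ) < k then (1 : ℝ) else 0) = k := by
    rw [Finset.sum_boole, Fin.card_filter_val_lt, min_eq_right hk]
  simp only [hsq, Finset.sum_add_distrib, ← Finset.sum_mul, hcount, Finset.sum_const,
    Finset.card_univ, Fintype.card_fin, nsmul_eq_mul]
  field_simp
  ring

section CenteredIndicator

variable {n k : ℕ} {u w : EuclideanSpace ℝ (Fin n)}

theorem norm_eq_of_centered_indicator (hk : k ≤ n)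
    (hu : ∀ i : Fin n, u i = (if (i : ℕ) < k then (1 : ℝ) else 0) - (k : ℝ) / (n : ℝ)) :
    ‖u‖ = √(k * (n - k) / n) := by
  rw [← sum_indicator_sub_mean_sq hk, ← Real.sqrt_sq (norm_nonneg u),
    EuclideanSpace.real_norm_sq_eq]
  simp only [hu]

theorem eq_single_sub_single_of_adjacent_difference (hkn : k < n)
    (hw : ∀ i : Fin n, w i =
      (if (i : ℕ) = k then (1 : ℝ) else 0) - (if (i : ℕ) = k - 1 then (1 : ℝ) else 0)) :
    w = EuclideanSpace.single ⟨k, hkn⟩ 1 - EuclideanSpace.single ⟨k - 1, by omega⟩ 1 := by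
  ext i
  simp [hw, Fin.ext_iff]

theorem norm_eq_sqrt_two_of_adjacent_difference (hk : 1 ≤ k) (hkn : k < n)
    (hw : ∀ i : Fin n, w i =
      (if (i : ℕ) = k then (1 : ℝ) else 0) - (if (i : ℕ) = k - 1 then (1 : ℝ) else 0)) :
    ‖w‖ = √2 := by
  rw [eq_single_sub_single_of_adjacent_difference hkn hw]
  refine EuclideanSpace.orthonormal_single.norm_sub_of_ne ?_
  rw [ne_eq, Fin.mk.injEq]
  omega

theorem inner_adjacent_difference_centered_indicator (hk : 1 ≤ k) (hkn : k < n)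
    (hu : ∀ i : Fin n, u i = (if (i : ℕ) < k then (1 : ℝ) else 0) - (k : ℝ) / (n : ℝ))
    (hw : ∀ i : Fin n, w i =
      (if (i : ℕ) = k then (1 : ℝ) else 0) - (if (i : ℕ) = k - 1 then (1 : ℝ) else 0)) :
    ⟪w, u⟫ = -1 := by
  rw [eq_single_sub_single_of_adjacent_difference hkn hw, inner_sub_left,
    EuclideanSpace.inner_single_left, EuclideanSpace.inner_single_left, hu, hu]
  simp only [Real.ringHom_apply, lt_self_iff_false, ↓reduceIte, zero_sub, mul_neg, one_mul,
    show k - 1 < k by omega]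
  ring

end CenteredIndicator

theorem one_div_sqrt_two_mul_sqrt (x : ℝ) : 1 / (√2 * √x) = √(1 / (2 * x)) := by
  rw [← Real.sqrt_mul zero_le_two, one_div, one_div, Real.sqrt_inv]

theorem one_div_two_mul_mul_sub_div (n k : ℝ) :
    1 / (2 * (k * (n - k) / n)) = n / (2 * k * (n - k)) := by
  rcases eq_or_ne n 0 with rfl | hn
  · simp
  field_simp

theorem two_div_le_div_two_mul_mul_sub {n k : ℝ} (hk : 0 < k) (hkn : k < n) :
    2 / n ≤ n / (2 * k * (n - k)) := by
  have hnk : 0 < n - k := sub_pos.2 hkn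
  rw [div_le_div_iff₀ (by linarith) (by positivity)]
  nlinarith [sq_nonneg (n - 2 * k)]

theorem div_two_mul_half_mul_sub_half_le {n : ℕ} (hn : 2 ≤ n) :
    (n : ℝ) / (2 * (n / 2 : ℕ) * (n - (n / 2 : ℕ))) ≤ 4 / n := by
  have hlow : (n - 1 : ℝ) / 2 ≤ (n / 2 : ℕ) := by
    have : n ≤ 2 * (n / 2) + 1 := by omega
    have : (n : ℝ) ≤ 2 * (n / 2 : ℕ) + 1 := by exact_mod_cast this
    linarith
  have hhigh : (n : ℝ) / 2 ≤ n - (n / 2 : ℕ) := by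
    have : 2 * (n / 2) ≤ n := by omega
    have : 2 * ((n / 2 : ℕ) : ℝ) ≤ n := by exact_mod_cast this
    linarith
  have hn' : (2 : ℝ) ≤ n := by exact_mod_cast hn
  rw [div_le_div_iff₀ (by nlinarith) (by positivity)]
  nlinarith

/-- for `n ≥ 2` and `1 ≤ k ≤ n-1`, the vectors
`u = Σ_{i=1}^k eᵢ − (k/n)·Σ_{i=1}^n eᵢ` and `w = e_{k+1} − e_k` in `ℝ^n` satisfy
`‖u‖ = √(k(n−k)/n)`, `|⟨w,u⟩| = 1`, and `|⟨w,u⟩|/(‖w‖·‖u‖) = √(n/(2k(n−k)))`;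
moreover, the minimum over `k ∈ {1,…,n−1}` of the latter quantity is `Θ(1/√n)`. -/
theorem statement18 :
    ∃ c C : ℝ, 0 < c ∧ 0 < C ∧
      ∀ n : ℕ, 2 ≤ n →
        (∀ k : ℕ, 1 ≤ k → k ≤ n - 1 →
          ∀ u w : EuclideanSpace ℝ (Fin n),
            (∀ i : Fin n, u i = (if (i : ℕ) < k then (1 : ℝ) else 0) - (k : ℝ) / (n : ℝ)) →
            (∀ i : Fin n, w i =
              (if (i : ℕ) = k then (1 : ℝ) else 0) - (if (i : ℕ) = k - 1 then (1 : ℝ) else 0)) →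
            ‖u‖ = Real.sqrt ((k : ℝ) * ((n : ℝ) - (k : ℝ)) / (n : ℝ)) ∧
            |⟪w, u⟫| = 1 ∧
            |⟪w, u⟫| / (‖w‖ * ‖u‖) =
              Real.sqrt ((n : ℝ) / (2 * (k : ℝ) * ((n : ℝ) - (k : ℝ))))) ∧
        c / Real.sqrt n ≤
          sInf {x : ℝ | ∃ k : ℕ, 1 ≤ k ∧ k ≤ n - 1 ∧
            x = Real.sqrt ((n : ℝ) / (2 * (k : ℝ) * ((n : ℝ) - (k : ℝ))))} ∧
        sInf {x : ℝ | ∃ k : ℕ, 1 ≤ k ∧ k ≤ n - 1 ∧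
            x = Real.sqrt ((n : ℝ) / (2 * (k : ℝ) * ((n : ℝ) - (k : ℝ))))} ≤
          C / Real.sqrt n := by
  refine ⟨√2, 2, by positivity, two_pos, fun n hn => ⟨fun k hk hkn u w hu hw => ?_, ?_, ?_⟩⟩
  · have hnorm_u := norm_eq_of_centered_indicator (by omega) hu
    have hinner := inner_adjacent_difference_centered_indicator hk (by omega) hu hw
    have habs : |⟪w, u⟫| = 1 := by rw [hinner, abs_neg, abs_one]
    refine ⟨hnorm_u, habs, ?_⟩
    rw [habs, norm_eq_sqrt_two_of_adjacent_difference hk (by omega) hw, hnorm_u,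
      one_div_sqrt_two_mul_sqrt, one_div_two_mul_mul_sub_div]
  · refine le_csInf ⟨_, 1, le_rfl, by omega, rfl⟩ ?_
    rintro _ ⟨k, hk, hkn, rfl⟩
    rw [← Real.sqrt_div' _ (Nat.cast_nonneg n)]
    exact Real.sqrt_le_sqrt (two_div_le_div_two_mul_mul_sub (by exact_mod_cast hk)
      (by norm_cast; omega))
  · have hbdd : BddBelow {x : ℝ | ∃ k : ℕ, 1 ≤ k ∧ k ≤ n - 1 ∧
        x = Real.sqrt ((n : ℝ) / (2 * (k : ℝ) * ((n : ℝ) - (k : ℝ))))} := by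
      refine ⟨0, ?_⟩
      rintro _ ⟨k, -, -, rfl⟩
      exact Real.sqrt_nonneg _
    refine (csInf_le hbdd ⟨n / 2, by omega, by omega, rfl⟩).trans ?_
    have hsqrt : (2 : ℝ) / √n = √(4 / n) := by
      rw [Real.sqrt_div' _ (Nat.cast_nonneg n), show (4 : ℝ) = 2 ^ 2 by norm_num,
        Real.sqrt_sq zero_le_two]
    rw [hsqrt]
    exact Real.sqrt_le_sqrt (div_two_mul_half_mul_sub_half_le hn)
end
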